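/- arXiv:1505.00220 — 2 statements merged into one kernel-verified Lean document; each statement's English description precedes it below -/
import Mathlib

section
/- Let C be a codifferential category with finite coproducts, g : A → B a morphism of T-algebras, and M a module over the induced algebra B. Then there is a natural bijection between morphisms A → W(B,M) in the slice category C^T/B (where A lies over B via g and W(B,M) via π₁) and T-derivations ∂ : A → M_A, given by f ↦ f;π₂. -/
open CategoryTheory CategoryTheory.Limits CategoryTheory.MonoidalCategory

universe v u

namespace CodiffPaper

/-- A category enriched in commutative monoids: each hom-set is a commutative
monoid and composition is biadditive (and preserves zero). -/
class CMonEnriched (C : Type u) [Category.{v} C] where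
  [homMonoid : ∀ X Y : C, AddCommMonoid (X ⟶ Y)]
  add_comp : ∀ {X Y Z : C} (f g : X ⟶ Y) (h : Y ⟶ Z), (f + g) ≫ h = f ≫ h + g ≫ h
  comp_add : ∀ {X Y Z : C} (f : X ⟶ Y) (g h : Y ⟶ Z), f ≫ (g + h) = f ≫ g + f ≫ h
  zero_comp : ∀ {X Y Z : C} (f : Y ⟶ Z), (0 : X ⟶ Y) ≫ f = (0 : X ⟶ Z)
  comp_zero : ∀ {X Y Z : C} (f : X ⟶ Y), f ≫ (0 : Y ⟶ Z) = (0 : X ⟶ Z)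

attribute [instance] CMonEnriched.homMonoid

instance (priority := 100) CMonEnriched.toHasZeroMorphisms
    (C : Type u) [Category.{v} C] [CMonEnriched C] : HasZeroMorphisms C where
  zero X Y := inferInstance
  comp_zero := fun {X Y} f Z => CMonEnriched.comp_zero f
  zero_comp := fun X {Y Z} f => CMonEnriched.zero_comp f

/-- An additive symmetric monoidal category: commutative-monoid enriched, and
the tensor product is additive in each variable. -/
class AdditiveMonoidal (C : Type u) [Category.{v} C] [MonoidalCategory C] extends
    CMonEnriched C where
  add_tensorHom : ∀ {X Y Z W : C} (f g : X ⟶ Y) (h : Z ⟶ W),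
    (f + g) ⊗ₘ h = (f ⊗ₘ h) + (g ⊗ₘ h)
  tensorHom_add : ∀ {X Y Z W : C} (f : X ⟶ Y) (g h : Z ⟶ W),
    f ⊗ₘ (g + h) = (f ⊗ₘ g) + (f ⊗ₘ h)
  zero_tensorHom : ∀ {X Y Z W : C} (h : Z ⟶ W), (0 : X ⟶ Y) ⊗ₘ h = 0
  tensorHom_zero : ∀ {X Y Z W : C} (f : X ⟶ Y), f ⊗ₘ (0 : Z ⟶ W) = 0

variable {C : Type u} [Category.{v} C]

/-- `π : Y ⟶ Q` is a coequalizer of `f` and `g` (elementwise formulation). -/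
def IsCoeq {X Y Q : C} (f g : X ⟶ Y) (π : Y ⟶ Q) : Prop :=
  f ≫ π = g ≫ π ∧ ∀ {Z : C} (h : Y ⟶ Z), f ≫ h = g ≫ h → ∃! t : Q ⟶ Z, π ≫ t = h

/-- The tensor product preserves reflexive coequalizers in each variable. -/
def TensorPreservesReflCoeq (C : Type u) [Category.{v} C] [MonoidalCategory C] : Prop :=
  ∀ {X Y Q : C} (f g : X ⟶ Y) (s : Y ⟶ X) (π : Y ⟶ Q),
    s ≫ f = 𝟙 Y → s ≫ g = 𝟙 Y → IsCoeq f g π →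
      ∀ Z : C, IsCoeq (Z ◁ f) (Z ◁ g) (Z ◁ π) ∧ IsCoeq (f ▷ Z) (g ▷ Z) (π ▷ Z)

section Monoidal

variable [MonoidalCategory C]

/-- A commutative algebra (commutative monoid object) structure. -/
structure IsCommAlg [SymmetricCategory C] {A : C} (mul : A ⊗ A ⟶ A) (unit : 𝟙_ C ⟶ A) : Prop where
  one_mul : (unit ▷ A) ≫ mul = (λ_ A).hom
  mul_one : (A ◁ unit) ≫ mul = (ρ_ A).hom
  mul_assoc : (mul ▷ A) ≫ mul = (α_ A A A).hom ≫ (A ◁ mul) ≫ mul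
  mul_comm : (β_ A A).hom ≫ mul = mul

/-- `f : A ⟶ B` is a homomorphism of algebras. -/
structure IsAlgHom {A B : C} (mulA : A ⊗ A ⟶ A) (unitA : 𝟙_ C ⟶ A)
    (mulB : B ⊗ B ⟶ B) (unitB : 𝟙_ C ⟶ B) (f : A ⟶ B) : Prop where
  map_mul : (f ⊗ₘ f) ≫ mulB = mulA ≫ f
  map_one : unitA ≫ f = unitB

/-- `act : A ⊗ M ⟶ M` is a module structure on `M` over the algebra `(A, mulA, unitA)`. -/
structure IsModule {A M : C} (mulA : A ⊗ A ⟶ A) (unitA : 𝟙_ C ⟶ A)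
    (act : A ⊗ M ⟶ M) : Prop where
  one_act : (unitA ▷ M) ≫ act = (λ_ M).hom
  mul_act : (mulA ▷ M) ≫ act = (α_ A A M).hom ≫ (A ◁ act) ≫ act

/-- A morphism of modules over `A` (a linear map). -/
def IsModuleMap {A M N : C} (actM : A ⊗ M ⟶ M) (actN : A ⊗ N ⟶ N) (h : M ⟶ N) : Prop :=
  actM ≫ h = (A ◁ h) ≫ actN

/-- The free `A`-module structure on `A ⊗ X`. -/
def freeAct {A : C} (mulA : A ⊗ A ⟶ A) (X : C) : A ⊗ (A ⊗ X) ⟶ A ⊗ X :=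
  (α_ A A X).inv ≫ (mulA ▷ X)

/-- `der : A ⟶ M` is a derivation from the algebra `(A, mulA, unitA)` to the module
`(M, act)`:  `m;der = c;(1⊗der);• + (1⊗der);•` and `e;der = 0`. -/
def IsDerivation [SymmetricCategory C] [CMonEnriched C] {A M : C}
    (mulA : A ⊗ A ⟶ A) (unitA : 𝟙_ C ⟶ A) (act : A ⊗ M ⟶ M) (der : A ⟶ M) : Prop :=
  (mulA ≫ der = (β_ A A).hom ≫ (A ◁ der) ≫ act + (A ◁ der) ≫ act) ∧ unitA ≫ der = 0

variable [SymmetricCategory C]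

/-- An algebra modality: each `T X` is naturally a commutative algebra. -/
structure IsAlgebraModality (T : Monad C)
    (mul : ∀ X : C, T.obj X ⊗ T.obj X ⟶ T.obj X)
    (unit : ∀ X : C, 𝟙_ C ⟶ T.obj X) : Prop where
  commAlg : ∀ X : C, IsCommAlg (mul X) (unit X)
  map_hom : ∀ {X Y : C} (f : X ⟶ Y),
    IsAlgHom (mul X) (unit X) (mul Y) (unit Y) (T.map f)
  mu_hom : ∀ X : C,
    IsAlgHom (mul (T.obj X)) (unit (T.obj X)) (mul X) (unit X) (T.μ.app X)

/-- A (bundled) algebra modality on `C`. -/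
structure AlgebraModality (C : Type u) [Category.{v} C] [MonoidalCategory C]
    [SymmetricCategory C] where
  T : Monad C
  mul : ∀ X : C, T.obj X ⊗ T.obj X ⟶ T.obj X
  unit : ∀ X : C, 𝟙_ C ⟶ T.obj X
  ismod : IsAlgebraModality T mul unit

/-- The multiplication of the commutative algebra induced on a `T`-algebra. -/
def algMul (Φ : AlgebraModality C) (A : Φ.T.Algebra) : A.A ⊗ A.A ⟶ A.A :=
  (Φ.T.η.app A.A ⊗ₘ Φ.T.η.app A.A) ≫ Φ.mul A.A ≫ A.a

/-- The unit of the commutative algebra induced on a `T`-algebra. -/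
def algUnit (Φ : AlgebraModality C) (A : Φ.T.Algebra) : 𝟙_ C ⟶ A.A :=
  Φ.unit A.A ≫ A.a

/-- `f : A ⟶ B` is a homomorphism of `T`-algebras (elementwise formulation). -/
def IsTAlgebraHom (T : Monad C) {A B : C} (νA : T.obj A ⟶ A) (νB : T.obj B ⟶ B)
    (f : A ⟶ B) : Prop :=
  T.map f ≫ νB = νA ≫ f

/-- `b : T X ⟶ X` is a `T`-algebra structure map. -/
def IsTAlgStr (T : Monad C) {X : C} (b : T.obj X ⟶ X) : Prop :=
  (T.η.app X ≫ b = 𝟙 X) ∧ (T.μ.app X ≫ b = T.map b ≫ b)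

variable [AdditiveMonoidal C]

/-- The axioms for a codifferential category on an additive symmetric monoidal
category: an algebra modality together with a deriving transform satisfying
(d1)–(d4). -/
structure IsCodifferential (T : Monad C)
    (mul : ∀ X : C, T.obj X ⊗ T.obj X ⟶ T.obj X)
    (unit : ∀ X : C, 𝟙_ C ⟶ T.obj X)
    (d : ∀ X : C, T.obj X ⟶ T.obj X ⊗ X) : Prop where
  ismod : IsAlgebraModality T mul unit
  d_natural : ∀ {X Y : C} (f : X ⟶ Y), T.map f ≫ d Y = d X ≫ (T.map f ⊗ₘ f)
  d1 : ∀ X : C, unit X ≫ d X = 0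
  d2 : ∀ X : C, mul X ≫ d X =
    (T.obj X ◁ d X) ≫ (α_ (T.obj X) (T.obj X) X).inv ≫ (mul X ▷ X)
    + (d X ▷ T.obj X) ≫ (α_ (T.obj X) X (T.obj X)).hom ≫
        (T.obj X ◁ (β_ X (T.obj X)).hom) ≫ (α_ (T.obj X) (T.obj X) X).inv ≫ (mul X ▷ X)
  d3 : ∀ X : C, T.η.app X ≫ d X = (λ_ X).inv ≫ (unit X ▷ X)
  d4 : ∀ X : C, T.μ.app X ≫ d X =
    d (T.obj X) ≫ (T.μ.app X ⊗ₘ d X) ≫ (α_ (T.obj X) (T.obj X) X).inv ≫ (mul X ▷ X)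

/-- A (bundled) codifferential category structure on `C`. -/
structure Codifferential (C : Type u) [Category.{v} C] [MonoidalCategory C]
    [SymmetricCategory C] [AdditiveMonoidal C] extends AlgebraModality C where
  d : ∀ X : C, T.obj X ⟶ T.obj X ⊗ X
  iscodiff : IsCodifferential T mul unit d

section Biproducts

variable [HasBinaryBiproducts C]

/-- The second component of the structure map of `W(A,M)`:
`β₂ = d;(Tπ₁ ⊗ π₂);(ν ⊗ 1);•`. -/
noncomputable def Wbeta2 (D : Codifferential C) (A : D.T.Algebra) {M : C} (act : A.A ⊗ M ⟶ M) :
    D.T.obj (A.A ⊞ M) ⟶ M :=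
  D.d (A.A ⊞ M) ≫ (D.T.map biprod.fst ⊗ₘ biprod.snd) ≫ (A.a ⊗ₘ 𝟙 M) ≫ act

/-- The structure map `β = ⟨β₁, β₂⟩ : T(A ⊕ M) ⟶ A ⊕ M` of `W(A,M)`. -/
noncomputable def Wbeta (D : Codifferential C) (A : D.T.Algebra) {M : C} (act : A.A ⊗ M ⟶ M) :
    D.T.obj (A.A ⊞ M) ⟶ A.A ⊞ M :=
  biprod.lift (D.T.map biprod.fst ≫ A.a) (Wbeta2 D A act)

end Biproducts

/-- A Kähler category: an additive symmetric monoidal category with an algebra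
modality such that every algebra `T X` has a module of Kähler differentials. -/
structure KahlerCategory (C : Type u) [Category.{v} C] [MonoidalCategory C]
    [SymmetricCategory C] [AdditiveMonoidal C] extends AlgebraModality C where
  Ω : C → C
  act : ∀ X : C, T.obj X ⊗ Ω X ⟶ Ω X
  ismodule : ∀ X : C, IsModule (mul X) (unit X) (act X)
  dK : ∀ X : C, T.obj X ⟶ Ω X
  isder : ∀ X : C, IsDerivation (mul X) (unit X) (act X) (dK X)
  universal : ∀ (X : C) {M : C} (actM : T.obj X ⊗ M ⟶ M),
    IsModule (mul X) (unit X) actM →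
    ∀ der : T.obj X ⟶ M, IsDerivation (mul X) (unit X) actM der →
      ∃! h : Ω X ⟶ M, IsModuleMap (act X) actM h ∧ dK X ≫ h = der

end Monoidal

/-!
A morphism `A ⟶ W(B,M)` over `B` is `⟨g, ∂⟩ = ⟨1, ∂⟩ ; (g ⊕ 1)`, and `g ⊕ 1 : W(A, M_A) ⟶ W(B, M)`
commutes with the structure maps by naturality of the deriving transform. The first component of
the `T`-algebra equation for `⟨1, ∂⟩` holds for every `∂`, and the second one transfers in both
directions along `g ⊕ 1` because `(g ⊕ 1) ; π₂ = π₂`.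
-/

theorem IsTAlgebraHom.comp {C : Type u} [Category.{v} C] {T : Monad C} {X Y Z : C}
    {νX : T.obj X ⟶ X} {νY : T.obj Y ⟶ Y} {νZ : T.obj Z ⟶ Z} {f : X ⟶ Y} {h : Y ⟶ Z}
    (hf : IsTAlgebraHom T νX νY f) (hh : IsTAlgebraHom T νY νZ h) : IsTAlgebraHom T νX νZ (f ≫ h) := by
  unfold IsTAlgebraHom at *
  rw [Functor.map_comp, Category.assoc, hh, reassoc_of% hf]

theorem biprod_lift_id_comp_map {C : Type u} [Category.{v} C] [HasZeroMorphisms C]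
    [HasBinaryBiproducts C] {X Y M : C} (g : X ⟶ Y) (der : X ⟶ M) :
    biprod.lift (𝟙 X) der ≫ biprod.map g (𝟙 M) = biprod.lift g der := by
  apply biprod.hom_ext <;> simp

section SquareZeroExtension

variable {C : Type u} [Category.{v} C] [MonoidalCategory C] [SymmetricCategory C]
  [AdditiveMonoidal C] [HasBinaryBiproducts C] (D : Codifferential C)

@[simp]
theorem Wbeta_fst (A : D.T.Algebra) {M : C} (act : A.A ⊗ M ⟶ M) :
    Wbeta D A act ≫ biprod.fst = D.T.map biprod.fst ≫ A.a :=
  biprod.lift_fst _ _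

@[simp]
theorem Wbeta_snd (A : D.T.Algebra) {M : C} (act : A.A ⊗ M ⟶ M) :
    Wbeta D A act ≫ biprod.snd = Wbeta2 D A act :=
  biprod.lift_snd _ _

theorem map_biprodMap_comp_Wbeta2 {A B : D.T.Algebra} (g : A ⟶ B) {M : C}
    (act : B.A ⊗ M ⟶ M) :
    D.T.map (biprod.map g.f (𝟙 M)) ≫ Wbeta2 D B act = Wbeta2 D A ((g.f ▷ M) ≫ act) := by
  have hproj : (D.T.map (biprod.map g.f (𝟙 M)) ⊗ₘ biprod.map g.f (𝟙 M)) ≫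
      (D.T.map biprod.fst ⊗ₘ biprod.snd) ≫ (B.a ⊗ₘ 𝟙 M)
      = (D.T.map biprod.fst ⊗ₘ biprod.snd) ≫ (A.a ⊗ₘ 𝟙 M) ≫ (g.f ▷ M) := by
    rw [← tensorHom_id]
    simp only [tensorHom_comp_tensorHom, biprod.map_snd, Category.comp_id]
    rw [← Functor.map_comp_assoc, biprod.map_fst, Functor.map_comp, Category.assoc, g.h]
  simp only [Wbeta2, reassoc_of% D.iscodiff.d_natural, reassoc_of% hproj]

theorem isTAlgebraHom_biprodMap {A B : D.T.Algebra} (g : A ⟶ B) {M : C} (act : B.A ⊗ M ⟶ M) :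
    IsTAlgebraHom D.T (Wbeta D A ((g.f ▷ M) ≫ act)) (Wbeta D B act) (biprod.map g.f (𝟙 M)) := by
  apply biprod.hom_ext
  · rw [Category.assoc, Category.assoc, biprod.map_fst, Wbeta_fst, reassoc_of% Wbeta_fst,
      ← Functor.map_comp_assoc, biprod.map_fst, Functor.map_comp, Category.assoc, g.h]
  · simp only [Category.assoc, Wbeta_snd, biprod.map_snd, Category.comp_id,
      map_biprodMap_comp_Wbeta2]

theorem isTAlgebraHom_lift_id_iff (A : D.T.Algebra) {M : C} (act : A.A ⊗ M ⟶ M)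
    (der : A.A ⟶ M) :
    IsTAlgebraHom D.T A.a (Wbeta D A act) (biprod.lift (𝟙 A.A) der) ↔
      D.T.map (biprod.lift (𝟙 A.A) der) ≫ Wbeta2 D A act = A.a ≫ der := by
  have hfst : D.T.map (biprod.lift (𝟙 A.A) der) ≫ Wbeta D A act ≫ biprod.fst
      = A.a ≫ biprod.lift (𝟙 A.A) der ≫ biprod.fst := by
    rw [Wbeta_fst, ← Functor.map_comp_assoc, biprod.lift_fst, D.T.map_id,
      Category.id_comp, Category.comp_id]
  constructor
  · intro h
    simpa only [Category.assoc, Wbeta_snd, biprod.lift_snd] using h =≫ biprod.snd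
  · intro h
    apply biprod.hom_ext
    · simpa only [Category.assoc] using hfst
    · simpa only [Category.assoc, Wbeta_snd, biprod.lift_snd] using h

end SquareZeroExtension

theorem statement16_general {C : Type u} [Category.{v} C] [MonoidalCategory C] [SymmetricCategory C]
    [AdditiveMonoidal C] [HasBinaryBiproducts C]
    (D : Codifferential C) (A B : D.T.Algebra) (g : A ⟶ B) {M : C} (act : B.A ⊗ M ⟶ M)
    (hW : IsTAlgStr D.T (Wbeta D B act)) :
    -- every morphism over `B` yields a `T`-derivation into `M_A` ...
    (∀ f : A ⟶ (⟨B.A ⊞ M, Wbeta D B act, hW.1, hW.2⟩ : D.T.Algebra),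
      f.f ≫ biprod.fst = g.f →
      D.T.map (biprod.lift (𝟙 A.A) (f.f ≫ biprod.snd)) ≫ Wbeta D A ((g.f ▷ M) ≫ act)
        = A.a ≫ biprod.lift (𝟙 A.A) (f.f ≫ biprod.snd)) ∧
    -- ... and every `T`-derivation arises from a unique morphism over `B`
    (∀ der : A.A ⟶ M,
      D.T.map (biprod.lift (𝟙 A.A) der) ≫ Wbeta D A ((g.f ▷ M) ≫ act)
        = A.a ≫ biprod.lift (𝟙 A.A) der →
      ∃! f : A ⟶ (⟨B.A ⊞ M, Wbeta D B act, hW.1, hW.2⟩ : D.T.Algebra),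
        f.f ≫ biprod.fst = g.f ∧ f.f ≫ biprod.snd = der) := by
  refine ⟨fun f hfst => ?_, fun der hder => ?_⟩
  · have hf : biprod.lift (𝟙 A.A) (f.f ≫ biprod.snd) ≫ biprod.map g.f (𝟙 M) = f.f := by
      rw [biprod_lift_id_comp_map, ← hfst]
      exact biprod.hom_ext _ _ (biprod.lift_fst _ _) (biprod.lift_snd _ _)
    refine (isTAlgebraHom_lift_id_iff D A _ _).2 ?_
    rw [← map_biprodMap_comp_Wbeta2, ← Functor.map_comp_assoc, hf, ← Wbeta_snd,
      reassoc_of% f.h]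
  · have hlift : IsTAlgebraHom D.T A.a (Wbeta D B act) (biprod.lift g.f der) := by
      rw [← biprod_lift_id_comp_map]
      exact IsTAlgebraHom.comp hder (isTAlgebraHom_biprodMap D g act)
    refine ⟨⟨biprod.lift g.f der, hlift⟩, ⟨biprod.lift_fst _ _, biprod.lift_snd _ _⟩, ?_⟩
    rintro f ⟨hfst, hsnd⟩
    ext1
    exact biprod.hom_ext _ _ (hfst.trans (biprod.lift_fst _ _).symm)
      (hsnd.trans (biprod.lift_snd _ _).symm)

/-- for a `T`-algebra map `g : A ⟶ B`, morphisms `A ⟶ W(B,M)` in the slice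
category `C^T/B` correspond bijectively, via `f ↦ f ; π₂`, to `T`-derivations
`der : A ⟶ M_A`. -/
theorem statement16 {C : Type u} [Category.{v} C] [MonoidalCategory C] [SymmetricCategory C]
    [AdditiveMonoidal C] [HasBinaryBiproducts C]
    (D : Codifferential C) (A B : D.T.Algebra) (g : A ⟶ B) {M : C} (act : B.A ⊗ M ⟶ M)
    (hact : IsModule (algMul D.toAlgebraModality B) (algUnit D.toAlgebraModality B) act)
    (hW : IsTAlgStr D.T (Wbeta D B act)) :
    -- every morphism over `B` yields a `T`-derivation into `M_A` ...
    (∀ f : A ⟶ (⟨B.A ⊞ M, Wbeta D B act, hW.1, hW.2⟩ : D.T.Algebra),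
      f.f ≫ biprod.fst = g.f →
      D.T.map (biprod.lift (𝟙 A.A) (f.f ≫ biprod.snd)) ≫ Wbeta D A ((g.f ▷ M) ≫ act)
        = A.a ≫ biprod.lift (𝟙 A.A) (f.f ≫ biprod.snd)) ∧
    -- ... and every `T`-derivation arises from a unique morphism over `B`
    (∀ der : A.A ⟶ M,
      D.T.map (biprod.lift (𝟙 A.A) der) ≫ Wbeta D A ((g.f ▷ M) ≫ act)
        = A.a ≫ biprod.lift (𝟙 A.A) der →
      ∃! f : A ⟶ (⟨B.A ⊞ M, Wbeta D B act, hW.1, hW.2⟩ : D.T.Algebra),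
        f.f ≫ biprod.fst = g.f ∧ f.f ≫ biprod.snd = der) :=
  statement16_general D A B g act hW

end CodiffPaper
end

section
/- Let C be a codifferential category with finite coproducts and reflexive coequalizers, the latter preserved by the tensor product in each variable. Then every T-algebra (A, ν) admits a universal T-derivation: there exist a module Ω^T_A over the induced algebra A and a T-derivation d_A : A → Ω^T_A such that for every A-module M and every T-derivation ∂ : A → M there is a unique A-linear morphism ∂# : Ω^T_A → M with d_A;∂# = ∂. Moreover Ω^T_A can be constructed as the reflexive coequalizer Ω_ν : Ω^T_{T A} → Ω^T_A of the induced maps Ω_μ, Ω_{Tν} : Ω^T_{T²A} ⇉ Ω^T_{TA} between the Kähler T-modules of the free T-algebras, with d_A determined by ν;d_A = d_{TA};Ω_ν. -/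
open CategoryTheory CategoryTheory.Limits CategoryTheory.MonoidalCategory

universe v u

namespace CodiffPaper

variable {C : Type u} [Category.{v} C]

/-! The Kähler module of a free algebra `TX` is `TX ⊗ X`, and since it is generated by `η;d`, a
linear map out of it is determined by its composite with `d`. Presenting `A` by the reflexive
pair `μ, Tν : T²A ⇉ TA`, let `π : TA ⊗ A ⟶ Q` coequalize `Ω_μ, Ω_{Tν}`. Because `⊗` preserves
this reflexive coequalizer, the `TA`-action on `TA ⊗ A` descends to `Q`; it factors through
`ν` because `Ω_{Tν}` is split by `Ω_{Tη}`, so `Q` is an `A`-module and `η;d;π` is a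
`T`-derivation. A `T`-derivation `∂ : A ⟶ M` gives the map `(ν ⊗ ∂);•` out of `TA ⊗ A`, which
coequalizes the pair by the chain rule (d4) and therefore descends uniquely to `Q`. -/

section Modules

variable {C : Type u} [Category.{v} C]

theorem IsCoeq.epi {X Y Q : C} {f g : X ⟶ Y} {π : Y ⟶ Q} (h : IsCoeq f g π) : Epi π where
  left_cancellation u v huv := by
    obtain ⟨t, -, ht⟩ := h.2 (π ≫ u) (by rw [← Category.assoc, h.1, Category.assoc])
    rw [ht u rfl, ht v huv.symm]

theorem isCoeq_coequalizer_π {X Y : C} (f g : X ⟶ Y) [HasCoequalizer f g] :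
    IsCoeq f g (coequalizer.π f g) :=
  ⟨coequalizer.condition f g, fun h w => ⟨coequalizer.desc h w, coequalizer.π_desc h w,
    fun _ hy => coequalizer.hom_ext (by rw [hy, coequalizer.π_desc])⟩⟩

variable [MonoidalCategory C]

theorem IsModuleMap.whiskerRight_comp {P B B' M N : C} {actM : P ⊗ M ⟶ M}
    {actN : B ⊗ N ⟶ N} {g : P ⟶ B} {q : M ⟶ N} (hq : IsModuleMap actM ((g ▷ N) ≫ actN) q)
    (s : B' ⟶ P) : (s ▷ M) ≫ actM ≫ q = (B' ◁ q) ≫ ((s ≫ g) ▷ N) ≫ actN := by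
  rw [hq, ← whisker_exchange_assoc, comp_whiskerRight_assoc]

theorem isModuleMap_comp_iff {P B Y Q M : C} {actY : P ⊗ Y ⟶ Y} {g : P ⟶ B}
    {act : B ⊗ Q ⟶ Q} {actM : B ⊗ M ⟶ M} {π : Y ⟶ Q} (hπ : IsModuleMap actY ((g ▷ Q) ≫ act) π)
    [Epi (g ⊗ₘ π)] (h : Q ⟶ M) :
    IsModuleMap act actM h ↔ IsModuleMap actY ((g ▷ M) ≫ actM) (π ≫ h) := by
  have hπ' : actY ≫ π = (g ⊗ₘ π) ≫ act := by rw [hπ, tensorHom_def'_assoc]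
  unfold IsModuleMap
  rw [← Category.assoc, hπ', Category.assoc, MonoidalCategory.whiskerLeft_comp_assoc,
    whisker_exchange_assoc, ← tensorHom_def'_assoc, cancel_epi]

theorem IsModule.of_epi_whiskerLeft {P Y Q : C} {m : P ⊗ P ⟶ P} {u : 𝟙_ C ⟶ P}
    {actY : P ⊗ Y ⟶ Y} (hY : IsModule m u actY) (π : Y ⟶ Q) [Epi (𝟙_ C ◁ π)]
    [Epi ((P ⊗ P) ◁ π)] {act : P ⊗ Q ⟶ Q} (h : (P ◁ π) ≫ act = actY ≫ π) :
    IsModule m u act where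
  one_act := by
    rw [← cancel_epi (𝟙_ C ◁ π), whisker_exchange_assoc, h, ← Category.assoc, hY.one_act,
      leftUnitor_naturality]
  mul_act := by
    rw [← cancel_epi ((P ⊗ P) ◁ π), whisker_exchange_assoc, h, ← Category.assoc, hY.mul_act]
    simp only [Category.assoc]
    rw [← h, ← MonoidalCategory.whiskerLeft_comp_assoc, ← h,
      MonoidalCategory.whiskerLeft_comp_assoc, associator_naturality_right_assoc]

theorem IsModule.of_isAlgHom_of_section {P B M : C} {mP : P ⊗ P ⟶ P} {uP : 𝟙_ C ⟶ P}
    {mB : B ⊗ B ⟶ B} {uB : 𝟙_ C ⟶ B} {g : P ⟶ B} (hg : IsAlgHom mP uP mB uB g) {s : B ⟶ P}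
    (hs : s ≫ g = 𝟙 B) {act : B ⊗ M ⟶ M} (h : IsModule mP uP ((g ▷ M) ≫ act)) :
    IsModule mB uB act where
  one_act := by rw [← hg.map_one, comp_whiskerRight_assoc, h.one_act]
  mul_act := by
    have hm : mB = (s ⊗ₘ s) ≫ mP ≫ g := by
      rw [← hg.map_mul, tensorHom_comp_tensorHom_assoc, hs, tensorHom_id, id_whiskerRight,
        Category.id_comp]
    have hα : ((s ⊗ₘ s) ▷ M) ≫ (α_ P P M).hom ≫ (P ◁ (g ▷ M)) ≫ (g ▷ (B ⊗ M))
        = (α_ B B M).hom :=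
      calc _ = ((s ⊗ₘ s) ▷ M) ≫ ((P ◁ g ≫ g ▷ B) ▷ M) ≫ (α_ B B M).hom := by monoidal
        _ = _ := by
          rw [← tensorHom_def', ← comp_whiskerRight_assoc, tensorHom_comp_tensorHom, hs]
          simp
    rw [hm]
    simp only [comp_whiskerRight, Category.assoc]
    rw [h.mul_act]
    simp only [MonoidalCategory.whiskerLeft_comp, Category.assoc]
    rw [whisker_exchange_assoc, reassoc_of% hα]

theorem isModuleMap_freeAct_tensorHom_comp {P B V M : C} {mP : P ⊗ P ⟶ P} {m : B ⊗ B ⟶ B}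
    {u : 𝟙_ C ⟶ B} {act : B ⊗ M ⟶ M} (hact : IsModule m u act) {g : P ⟶ B}
    (hg : (g ⊗ₘ g) ≫ m = mP ≫ g) (k : V ⟶ M) :
    IsModuleMap (freeAct mP V) ((g ▷ M) ≫ act) ((g ⊗ₘ k) ≫ act) :=
  calc freeAct mP V ≫ (g ⊗ₘ k) ≫ act
      = (α_ P P V).inv ≫ ((g ⊗ₘ g) ▷ V) ≫ ((B ⊗ B) ◁ k) ≫ (m ▷ M) ≫ act := by
        rw [freeAct, MonoidalCategory.tensorHom_def g k]
        simp only [Category.assoc]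
        rw [← comp_whiskerRight_assoc, ← hg, comp_whiskerRight_assoc, ← whisker_exchange_assoc]
    _ = ((α_ P P V).inv ≫ ((g ⊗ₘ g) ⊗ₘ k) ≫ (α_ B B M).hom) ≫ (B ◁ act) ≫ act := by
        rw [hact.mul_act, tensorHom_def_assoc]
        simp only [Category.assoc]
    _ = (P ◁ ((g ⊗ₘ k) ≫ act)) ≫ (g ▷ M) ≫ act := by
        rw [associator_naturality, Iso.inv_hom_id_assoc, MonoidalCategory.whiskerLeft_comp_assoc,
          whisker_exchange_assoc, ← tensorHom_def'_assoc]

variable [SymmetricCategory C]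

theorem isModule_freeAct {P : C} {m : P ⊗ P ⟶ P} {u : 𝟙_ C ⟶ P} (h : IsCommAlg m u) (Y : C) :
    IsModule m u (freeAct m Y) where
  one_act := by
    rw [freeAct, associator_inv_naturality_left_assoc, ← comp_whiskerRight, h.one_mul,
      leftUnitor_tensor_hom]
  mul_act := by
    simp only [freeAct, associator_inv_naturality_left_assoc, ← comp_whiskerRight, h.mul_assoc,
      MonoidalCategory.whiskerLeft_comp]
    simp only [comp_whiskerRight, Category.assoc]
    monoidal

end Modules

theorem AlgebraModality.isAlgHom_a {C : Type u} [Category.{v} C] [MonoidalCategory C]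
    [SymmetricCategory C] (Φ : AlgebraModality C) (A : Φ.T.Algebra) :
    IsAlgHom (Φ.mul A.A) (Φ.unit A.A) (algMul Φ A) (algUnit Φ A) A.a where
  map_mul := by
    rw [algMul, tensorHom_comp_tensorHom_assoc, Monad.unit_naturality,
      ← tensorHom_comp_tensorHom_assoc, reassoc_of% (Φ.ismod.map_hom A.a).map_mul, ← A.assoc,
      ← reassoc_of% (Φ.ismod.mu_hom A.A).map_mul, tensorHom_comp_tensorHom_assoc, Φ.T.left_unit]
    simp
  map_one := rfl

namespace Codifferential

variable {C : Type u} [Category.{v} C] [MonoidalCategory C] [SymmetricCategory C]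
  [AdditiveMonoidal C] (D : Codifferential C)

theorem whiskerLeft_η_d_comp_freeAct (X : C) :
    (D.T.obj X ◁ (D.T.η.app X ≫ D.d X)) ≫ freeAct (D.mul X) X = 𝟙 (D.T.obj X ⊗ X) := by
  rw [D.iscodiff.d3, freeAct, MonoidalCategory.whiskerLeft_comp, Category.assoc,
    associator_inv_naturality_middle_assoc, ← comp_whiskerRight, (D.ismod.commAlg X).mul_one]
  monoidal

theorem eq_tensorHom_of_isModuleMap {X B N : C} {g : D.T.obj X ⟶ B} {act : B ⊗ N ⟶ N}
    {q : D.T.obj X ⊗ X ⟶ N} (hq : IsModuleMap (freeAct (D.mul X) X) ((g ▷ N) ≫ act) q) :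
    q = (g ⊗ₘ (D.T.η.app X ≫ D.d X ≫ q)) ≫ act :=
  calc q = (D.T.obj X ◁ (D.T.η.app X ≫ D.d X)) ≫ freeAct (D.mul X) X ≫ q := by
        rw [← Category.assoc, whiskerLeft_η_d_comp_freeAct]
        exact (Category.id_comp q).symm
    _ = _ := by
        rw [hq, ← MonoidalCategory.whiskerLeft_comp_assoc, ← tensorHom_def'_assoc]
        simp only [Category.assoc]

theorem hom_ext_of_isModuleMap {X B N : C} {g : D.T.obj X ⟶ B} {act : B ⊗ N ⟶ N}
    {q q' : D.T.obj X ⊗ X ⟶ N} (hq : IsModuleMap (freeAct (D.mul X) X) ((g ▷ N) ≫ act) q)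
    (hq' : IsModuleMap (freeAct (D.mul X) X) ((g ▷ N) ≫ act) q') (h : D.d X ≫ q = D.d X ≫ q') :
    q = q' := by
  rw [D.eq_tensorHom_of_isModuleMap hq, D.eq_tensorHom_of_isModuleMap hq', h]

theorem η_d_tensorHom_comp {X B N : C} {m : B ⊗ B ⟶ B} {u : 𝟙_ C ⟶ B} {act : B ⊗ N ⟶ N}
    (hact : IsModule m u act) {g : D.T.obj X ⟶ B} (hg : D.unit X ≫ g = u) (k : X ⟶ N) :
    D.T.η.app X ≫ D.d X ≫ (g ⊗ₘ k) ≫ act = k := by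
  rw [← Category.assoc, D.iscodiff.d3, MonoidalCategory.tensorHom_def]
  simp only [Category.assoc]
  rw [← comp_whiskerRight_assoc, hg, ← whisker_exchange_assoc, hact.one_act,
    leftUnitor_naturality, Iso.inv_hom_id_assoc]

/-- On free algebras `Ω^T_{TX} = TX ⊗ X`; these are the induced maps `Ω_μ` and `Ω_{Tf}`. -/
def Ωμ (X : C) : D.T.obj (D.T.obj X) ⊗ D.T.obj X ⟶ D.T.obj X ⊗ X :=
  (D.T.μ.app X ⊗ₘ D.d X) ≫ freeAct (D.mul X) X

def ΩT {X Y : C} (f : X ⟶ Y) : D.T.obj X ⊗ X ⟶ D.T.obj Y ⊗ Y :=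
  D.T.map f ⊗ₘ f

theorem d_comp_Ωμ (X : C) : D.d (D.T.obj X) ≫ D.Ωμ X = D.T.μ.app X ≫ D.d X := by
  rw [Ωμ, freeAct, D.iscodiff.d4]

theorem d_comp_ΩT {X Y : C} (f : X ⟶ Y) : D.d X ≫ D.ΩT f = D.T.map f ≫ D.d Y :=
  (D.iscodiff.d_natural f).symm

theorem isModuleMap_Ωμ (X : C) :
    IsModuleMap (freeAct (D.mul (D.T.obj X)) (D.T.obj X))
      ((D.T.μ.app X ▷ (D.T.obj X ⊗ X)) ≫ freeAct (D.mul X) X) (D.Ωμ X) :=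
  isModuleMap_freeAct_tensorHom_comp (isModule_freeAct (D.ismod.commAlg X) X)
    (D.ismod.mu_hom X).map_mul (D.d X)

theorem ΩT_eq {X Y : C} (f : X ⟶ Y) :
    D.ΩT f = (D.T.map f ⊗ₘ (f ≫ D.T.η.app Y ≫ D.d Y)) ≫ freeAct (D.mul Y) Y := by
  rw [MonoidalCategory.tensorHom_def (D.T.map f) (f ≫ D.T.η.app Y ≫ D.d Y),
    MonoidalCategory.whiskerLeft_comp]
  simp only [Category.assoc]
  rw [whiskerLeft_η_d_comp_freeAct, ΩT, MonoidalCategory.tensorHom_def]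
  simp

theorem isModuleMap_ΩT {X Y : C} (f : X ⟶ Y) :
    IsModuleMap (freeAct (D.mul X) X)
      ((D.T.map f ▷ (D.T.obj Y ⊗ Y)) ≫ freeAct (D.mul Y) Y) (D.ΩT f) := by
  rw [ΩT_eq]
  exact isModuleMap_freeAct_tensorHom_comp (isModule_freeAct (D.ismod.commAlg Y) Y)
    (D.ismod.map_hom f).map_mul _

theorem ΩT_η_comp_ΩT_a (A : D.T.Algebra) :
    D.ΩT (D.T.η.app A.A) ≫ D.ΩT A.a = 𝟙 (D.T.obj A.A ⊗ A.A) := by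
  rw [ΩT, ΩT, tensorHom_comp_tensorHom, ← CategoryTheory.Functor.map_comp, A.unit]
  simp

theorem ΩT_η_comp_Ωμ (X : C) : D.ΩT (D.T.η.app X) ≫ D.Ωμ X = 𝟙 (D.T.obj X ⊗ X) := by
  rw [ΩT, Ωμ, tensorHom_comp_tensorHom_assoc, D.T.right_unit]
  simpa using D.whiskerLeft_η_d_comp_freeAct X

end Codifferential

section UniversalDerivation

variable {C : Type u} [Category.{v} C] [MonoidalCategory C] [SymmetricCategory C]
  [AdditiveMonoidal C] {D : Codifferential C}

def IsTDerivation (D : Codifferential C) (A : D.T.Algebra) {M : C} (act : A.A ⊗ M ⟶ M)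
    (der : A.A ⟶ M) : Prop :=
  D.d A.A ≫ (A.a ⊗ₘ der) ≫ act = A.a ≫ der

def IsUniversalTDerivation (D : Codifferential C) (A : D.T.Algebra) {Ω : C}
    (actΩ : A.A ⊗ Ω ⟶ Ω) (dA : A.A ⟶ Ω) : Prop :=
  IsModule (algMul D.toAlgebraModality A) (algUnit D.toAlgebraModality A) actΩ ∧
    IsTDerivation D A actΩ dA ∧
    ∀ {M : C} (actM : A.A ⊗ M ⟶ M),
      IsModule (algMul D.toAlgebraModality A) (algUnit D.toAlgebraModality A) actM →
      ∀ der : A.A ⟶ M, IsTDerivation D A actM der →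
        ∃! h : Ω ⟶ M, IsModuleMap actΩ actM h ∧ dA ≫ h = der

variable {A : D.T.Algebra} {Q : C} {π : D.T.obj A.A ⊗ A.A ⟶ Q}

theorem isCoeq_whiskerLeft_Ωμ_ΩT (hpres : TensorPreservesReflCoeq C)
    (hπ : IsCoeq (D.Ωμ A.A) (D.ΩT A.a) π) (Z : C) :
    IsCoeq (Z ◁ D.Ωμ A.A) (Z ◁ D.ΩT A.a) (Z ◁ π) :=
  (hpres _ _ (D.ΩT (D.T.η.app A.A)) π (D.ΩT_η_comp_Ωμ A.A)
    (D.ΩT_η_comp_ΩT_a A) hπ Z).1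

theorem whiskerLeft_Ωμ_freeAct_comp (hπ : IsCoeq (D.Ωμ A.A) (D.ΩT A.a) π) :
    (D.T.obj A.A ◁ D.Ωμ A.A) ≫ freeAct (D.mul A.A) A.A ≫ π
      = (D.T.obj A.A ◁ D.ΩT A.a) ≫ freeAct (D.mul A.A) A.A ≫ π := by
  have hμ := (D.isModuleMap_Ωμ A.A).whiskerRight_comp (D.T.map (D.T.η.app A.A)) =≫ π
  have hν := (D.isModuleMap_ΩT A.a).whiskerRight_comp (D.T.map (D.T.η.app A.A)) =≫ π
  rw [D.T.right_unit] at hμ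
  rw [← CategoryTheory.Functor.map_comp, A.unit] at hν
  simp only [Functor.id_obj, Category.assoc, id_whiskerRight, Category.id_comp,
    CategoryTheory.Functor.map_id] at hμ hν
  rw [← hμ, hπ.1, hν]

theorem whiskerRight_a_η_freeAct_comp (hπ : IsCoeq (D.Ωμ A.A) (D.ΩT A.a) π) :
    ((A.a ≫ D.T.η.app A.A) ▷ (D.T.obj A.A ⊗ A.A)) ≫ freeAct (D.mul A.A) A.A ≫ π
      = freeAct (D.mul A.A) A.A ≫ π := by
  have : IsSplitEpi (D.T.obj A.A ◁ D.ΩT A.a) :=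
    IsSplitEpi.mk' ⟨D.T.obj A.A ◁ D.ΩT (D.T.η.app A.A), by
      rw [← MonoidalCategory.whiskerLeft_comp, D.ΩT_η_comp_ΩT_a, MonoidalCategory.whiskerLeft_id]⟩
  have hμ := (D.isModuleMap_Ωμ A.A).whiskerRight_comp (D.T.η.app (D.T.obj A.A)) =≫ π
  have hν := (D.isModuleMap_ΩT A.a).whiskerRight_comp (D.T.η.app (D.T.obj A.A)) =≫ π
  rw [D.T.left_unit] at hμ
  rw [← Monad.unit_naturality] at hν
  simp only [Functor.id_obj, Category.assoc, id_whiskerRight, Category.id_comp] at hμ hν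
  rw [← cancel_epi (D.T.obj A.A ◁ D.ΩT A.a), ← hν, ← hπ.1, hμ, whiskerLeft_Ωμ_freeAct_comp hπ]

theorem exists_isModuleMap_of_isCoeq (hpres : TensorPreservesReflCoeq C)
    (hπ : IsCoeq (D.Ωμ A.A) (D.ΩT A.a) π) :
    ∃ act : A.A ⊗ Q ⟶ Q, IsModuleMap (freeAct (D.mul A.A) A.A) ((A.a ▷ Q) ≫ act) π := by
  have hw := isCoeq_whiskerLeft_Ωμ_ΩT hpres hπ (D.T.obj A.A)
  obtain ⟨actT, hactT, -⟩ := hw.2 (freeAct (D.mul A.A) A.A ≫ π)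
    (by simpa only [Category.assoc] using whiskerLeft_Ωμ_freeAct_comp hπ)
  refine ⟨(D.T.η.app A.A ▷ Q) ≫ actT, ?_⟩
  rw [IsModuleMap, ← hactT, ← comp_whiskerRight_assoc, whisker_exchange_assoc, hactT,
    whiskerRight_a_η_freeAct_comp hπ]

theorem isModule_of_isCoeq (hpres : TensorPreservesReflCoeq C)
    (hπ : IsCoeq (D.Ωμ A.A) (D.ΩT A.a) π) {act : A.A ⊗ Q ⟶ Q}
    (hact : IsModuleMap (freeAct (D.mul A.A) A.A) ((A.a ▷ Q) ≫ act) π) :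
    IsModule (algMul D.toAlgebraModality A) (algUnit D.toAlgebraModality A) act := by
  have := (isCoeq_whiskerLeft_Ωμ_ΩT hpres hπ (𝟙_ C)).epi
  have := (isCoeq_whiskerLeft_Ωμ_ΩT hpres hπ (D.T.obj A.A ⊗ D.T.obj A.A)).epi
  exact .of_isAlgHom_of_section (D.isAlgHom_a A) A.unit
    ((isModule_freeAct (D.ismod.commAlg A.A) A.A).of_epi_whiskerLeft π hact.symm)

theorem a_comp_η_d_comp (hπ : IsCoeq (D.Ωμ A.A) (D.ΩT A.a) π) :
    A.a ≫ D.T.η.app A.A ≫ D.d A.A ≫ π = D.d A.A ≫ π := by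
  rw [Monad.unit_naturality_assoc, ← reassoc_of% D.d_comp_ΩT A.a, ← hπ.1,
    reassoc_of% D.d_comp_Ωμ A.A, Monad.left_unit_assoc]

theorem Ωμ_comp_eq_ΩT_comp {M : C} {actM : A.A ⊗ M ⟶ M}
    (hM : IsModule (algMul D.toAlgebraModality A) (algUnit D.toAlgebraModality A) actM)
    {der : A.A ⟶ M} (hder : IsTDerivation D A actM der) :
    D.Ωμ A.A ≫ (A.a ⊗ₘ der) ≫ actM = D.ΩT A.a ≫ (A.a ⊗ₘ der) ≫ actM :=
  calc D.Ωμ A.A ≫ (A.a ⊗ₘ der) ≫ actM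
      = (D.T.μ.app A.A ⊗ₘ D.d A.A) ≫ (D.T.obj A.A ◁ ((A.a ⊗ₘ der) ≫ actM)) ≫
          (A.a ▷ M) ≫ actM := by
        rw [Codifferential.Ωμ, Category.assoc,
          isModuleMap_freeAct_tensorHom_comp hM (D.isAlgHom_a A).map_mul der]
    _ = ((D.T.μ.app A.A ≫ A.a) ⊗ₘ (D.d A.A ≫ (A.a ⊗ₘ der) ≫ actM)) ≫ actM := by
        rw [← id_tensorHom, ← tensorHom_id, tensorHom_comp_tensorHom_assoc,
          tensorHom_comp_tensorHom_assoc]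
        simp
    _ = ((D.T.map A.a ≫ A.a) ⊗ₘ (A.a ≫ der)) ≫ actM := by rw [A.assoc, hder]
    _ = D.ΩT A.a ≫ (A.a ⊗ₘ der) ≫ actM := by
        rw [Codifferential.ΩT, tensorHom_comp_tensorHom_assoc]

theorem isUniversalTDerivation_of_isCoeq (hpres : TensorPreservesReflCoeq C)
    (hπ : IsCoeq (D.Ωμ A.A) (D.ΩT A.a) π) {act : A.A ⊗ Q ⟶ Q}
    (hact : IsModuleMap (freeAct (D.mul A.A) A.A) ((A.a ▷ Q) ≫ act) π) :
    IsUniversalTDerivation D A act (D.T.η.app A.A ≫ D.d A.A ≫ π) := by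
  have := hπ.epi
  have := (isCoeq_whiskerLeft_Ωμ_ΩT hpres hπ (D.T.obj A.A)).epi
  have : IsSplitEpi (A.a ▷ Q) := IsSplitEpi.mk' ⟨D.T.η.app A.A ▷ Q, by
    rw [← comp_whiskerRight, A.unit]
    simp⟩
  have : Epi (A.a ⊗ₘ π) := by
    rw [tensorHom_def']
    exact epi_comp _ _
  refine ⟨isModule_of_isCoeq hpres hπ hact, ?_, fun actM hM der hder => ?_⟩
  · rw [IsTDerivation, ← D.eq_tensorHom_of_isModuleMap hact, a_comp_η_d_comp hπ]
  obtain ⟨h, hπh, -⟩ := hπ.2 _ (Ωμ_comp_eq_ΩT_comp hM hder)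
  have hlin := isModuleMap_freeAct_tensorHom_comp hM (D.isAlgHom_a A).map_mul der
  refine ⟨h, ⟨(isModuleMap_comp_iff hact h).2 (hπh ▸ hlin), ?_⟩, ?_⟩
  · rw [Category.assoc, Category.assoc, hπh, D.η_d_tensorHom_comp hM rfl]
  · rintro h' ⟨hh', hdh'⟩
    rw [← cancel_epi π, hπh, D.eq_tensorHom_of_isModuleMap ((isModuleMap_comp_iff hact h').1 hh')]
    simp only [Category.assoc] at hdh'
    rw [hdh']

theorem exists_isUniversalTDerivation_of_isCoeq (hpres : TensorPreservesReflCoeq C)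
    (hπ : IsCoeq (D.Ωμ A.A) (D.ΩT A.a) π) :
    ∃ act : A.A ⊗ Q ⟶ Q, IsUniversalTDerivation D A act (D.T.η.app A.A ≫ D.d A.A ≫ π) :=
  (exists_isModuleMap_of_isCoeq hpres hπ).imp fun _ => isUniversalTDerivation_of_isCoeq hpres hπ

end UniversalDerivation

theorem statement17_general {C : Type u} [Category.{v} C] [MonoidalCategory C] [SymmetricCategory C]
    [AdditiveMonoidal C] [HasReflexiveCoequalizers C]
    (hpres : TensorPreservesReflCoeq C) (D : Codifferential C) (A : D.T.Algebra) :
    -- existence of a universal `T`-derivation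
    (∃ (Ω : C) (actQ : A.A ⊗ Ω ⟶ Ω) (dA : A.A ⟶ Ω),
      IsModule (algMul D.toAlgebraModality A) (algUnit D.toAlgebraModality A) actQ ∧
      (D.d A.A ≫ (A.a ⊗ₘ dA) ≫ actQ = A.a ≫ dA) ∧
      (∀ {M : C} (actM : A.A ⊗ M ⟶ M),
        IsModule (algMul D.toAlgebraModality A) (algUnit D.toAlgebraModality A) actM →
        ∀ der : A.A ⟶ M, D.d A.A ≫ (A.a ⊗ₘ der) ≫ actM = A.a ≫ der →
          ∃! h : Ω ⟶ M, IsModuleMap actQ actM h ∧ dA ≫ h = der)) ∧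
    -- the construction as a coequalizer of the induced maps `Ω_μ` and `Ω_{Tν}`
    (∀ (q1 q2 : D.T.obj (D.T.obj A.A) ⊗ D.T.obj A.A ⟶ D.T.obj A.A ⊗ A.A),
      IsModuleMap (freeAct (D.mul (D.T.obj A.A)) (D.T.obj A.A))
        ((D.T.μ.app A.A ▷ (D.T.obj A.A ⊗ A.A)) ≫ freeAct (D.mul A.A) A.A) q1 →
      D.d (D.T.obj A.A) ≫ q1 = D.T.μ.app A.A ≫ D.d A.A →
      IsModuleMap (freeAct (D.mul (D.T.obj A.A)) (D.T.obj A.A))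
        ((D.T.map A.a ▷ (D.T.obj A.A ⊗ A.A)) ≫ freeAct (D.mul A.A) A.A) q2 →
      D.d (D.T.obj A.A) ≫ q2 = D.T.map A.a ≫ D.d A.A →
      ∀ {Q : C} (π : D.T.obj A.A ⊗ A.A ⟶ Q), IsCoeq q1 q2 π →
        ∃ (actQ : A.A ⊗ Q ⟶ Q) (dA : A.A ⟶ Q),
          IsModule (algMul D.toAlgebraModality A) (algUnit D.toAlgebraModality A) actQ ∧
          A.a ≫ dA = D.d A.A ≫ π ∧
          (D.d A.A ≫ (A.a ⊗ₘ dA) ≫ actQ = A.a ≫ dA) ∧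
          (∀ {M : C} (actM : A.A ⊗ M ⟶ M),
            IsModule (algMul D.toAlgebraModality A) (algUnit D.toAlgebraModality A) actM →
            ∀ der : A.A ⟶ M, D.d A.A ≫ (A.a ⊗ₘ der) ≫ actM = A.a ≫ der →
              ∃! h : Q ⟶ M, IsModuleMap actQ actM h ∧ dA ≫ h = der)) := by
  refine ⟨?_, fun q1 q2 hq1 hq1d hq2 hq2d Q π hπ => ?_⟩
  · have := hasCoequalizer_of_common_section C _ (D.ΩT_η_comp_Ωμ A.A) (D.ΩT_η_comp_ΩT_a A)
    obtain ⟨act, hact⟩ :=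
      exists_isUniversalTDerivation_of_isCoeq hpres (isCoeq_coequalizer_π (D.Ωμ A.A) (D.ΩT A.a))
    exact ⟨_, act, _, hact⟩
  obtain rfl : q1 = D.Ωμ A.A :=
    D.hom_ext_of_isModuleMap hq1 (D.isModuleMap_Ωμ A.A) (hq1d.trans (D.d_comp_Ωμ A.A).symm)
  obtain rfl : q2 = D.ΩT A.a :=
    D.hom_ext_of_isModuleMap hq2 (D.isModuleMap_ΩT A.a) (hq2d.trans (D.d_comp_ΩT A.a).symm)
  obtain ⟨act, hmod, hder, huniv⟩ := exists_isUniversalTDerivation_of_isCoeq hpres hπ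
  exact ⟨act, _, hmod, a_comp_η_d_comp hπ, hder, huniv⟩

/-- in a codifferential category with reflexive coequalizers preserved by
the tensor product, every `T`-algebra `(A, ν)` has a universal `T`-derivation; it can be
constructed as the reflexive coequalizer of `Ω_μ, Ω_{Tν} : T²A ⊗ TA ⇉ TA ⊗ A`. -/
theorem statement17 {C : Type u} [Category.{v} C] [MonoidalCategory C] [SymmetricCategory C]
    [AdditiveMonoidal C] [HasBinaryBiproducts C] [HasReflexiveCoequalizers C]
    (hpres : TensorPreservesReflCoeq C) (D : Codifferential C) (A : D.T.Algebra) :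
    -- existence of a universal `T`-derivation
    (∃ (Ω : C) (actQ : A.A ⊗ Ω ⟶ Ω) (dA : A.A ⟶ Ω),
      IsModule (algMul D.toAlgebraModality A) (algUnit D.toAlgebraModality A) actQ ∧
      (D.d A.A ≫ (A.a ⊗ₘ dA) ≫ actQ = A.a ≫ dA) ∧
      (∀ {M : C} (actM : A.A ⊗ M ⟶ M),
        IsModule (algMul D.toAlgebraModality A) (algUnit D.toAlgebraModality A) actM →
        ∀ der : A.A ⟶ M, D.d A.A ≫ (A.a ⊗ₘ der) ≫ actM = A.a ≫ der →
          ∃! h : Ω ⟶ M, IsModuleMap actQ actM h ∧ dA ≫ h = der)) ∧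
    -- the construction as a coequalizer of the induced maps `Ω_μ` and `Ω_{Tν}`
    (∀ (q1 q2 : D.T.obj (D.T.obj A.A) ⊗ D.T.obj A.A ⟶ D.T.obj A.A ⊗ A.A),
      IsModuleMap (freeAct (D.mul (D.T.obj A.A)) (D.T.obj A.A))
        ((D.T.μ.app A.A ▷ (D.T.obj A.A ⊗ A.A)) ≫ freeAct (D.mul A.A) A.A) q1 →
      D.d (D.T.obj A.A) ≫ q1 = D.T.μ.app A.A ≫ D.d A.A →
      IsModuleMap (freeAct (D.mul (D.T.obj A.A)) (D.T.obj A.A))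
        ((D.T.map A.a ▷ (D.T.obj A.A ⊗ A.A)) ≫ freeAct (D.mul A.A) A.A) q2 →
      D.d (D.T.obj A.A) ≫ q2 = D.T.map A.a ≫ D.d A.A →
      ∀ {Q : C} (π : D.T.obj A.A ⊗ A.A ⟶ Q), IsCoeq q1 q2 π →
        ∃ (actQ : A.A ⊗ Q ⟶ Q) (dA : A.A ⟶ Q),
          IsModule (algMul D.toAlgebraModality A) (algUnit D.toAlgebraModality A) actQ ∧
          A.a ≫ dA = D.d A.A ≫ π ∧
          (D.d A.A ≫ (A.a ⊗ₘ dA) ≫ actQ = A.a ≫ dA) ∧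
          (∀ {M : C} (actM : A.A ⊗ M ⟶ M),
            IsModule (algMul D.toAlgebraModality A) (algUnit D.toAlgebraModality A) actM →
            ∀ der : A.A ⟶ M, D.d A.A ≫ (A.a ⊗ₘ der) ≫ actM = A.a ≫ der →
              ∃! h : Q ⟶ M, IsModuleMap actQ actM h ∧ dA ≫ h = der)) :=
  statement17_general hpres D A

end CodiffPaper
end
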